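/- Consider the map ℙ² × ℙ² → ℙ⁵ given by ((x:y:z), (x̃:ỹ:z̃)) ↦ (xx̃ : yỹ : zz̃ : xỹ+x̃y : xz̃+x̃z : yz̃+ỹz). This is a well-defined morphism (the six coordinates have no common zero on ℙ² × ℙ²), and two points of ℙ² × ℙ² have the same image if and only if they agree up to swapping the two factors. -/
import Mathlib


/-- The six bilinear forms defining the map `ℙ² × ℙ² → ℙ⁵`,
`((x:y:z),(x̃:ỹ:z̃)) ↦ (xx̃ : yỹ : zz̃ : xỹ+x̃y : xz̃+x̃z : yz̃+ỹz)`,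
evaluated on representatives `v`, `w`. -/
def symMap {k : Type*} [Field k] (v w : Fin 3 → k) : Fin 6 → k :=
  ![v 0 * w 0, v 1 * w 1, v 2 * w 2,
    v 0 * w 1 + w 0 * v 1, v 0 * w 2 + w 0 * v 2, v 1 * w 2 + w 1 * v 2]

namespace Stmt15Aux

variable {k : Type*} [Field k]

/-- The linear form with coefficient vector `v`, evaluated at `X`. -/
def L (v X : Fin 3 → k) : k := v 0 * X 0 + v 1 * X 1 + v 2 * X 2

lemma L_add (v X Y : Fin 3 → k) : L v (X + Y) = L v X + L v Y := by
  simp [L]; ring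

lemma L_single (v : Fin 3 → k) (j : Fin 3) (c : k) :
    L v (Pi.single j c) = v j * c := by
  fin_cases j <;> simp [L, Pi.single_apply]

lemma L_smul_left (a : k) (v X : Fin 3 → k) : L (a • v) X = a * L v X := by
  simp [L]; ring

lemma L_sub_left (v w X : Fin 3 → k) : L (v - w) X = L v X - L w X := by
  simp [L]; ring

lemma vec6_five (a b c d e f : k) : ![a, b, c, d, e, f] 5 = f := rfl

/-- `symMap v w` is the coefficient vector of the quadratic form `(v·X)(w·X)`. -/
lemma prod_expand (v w X : Fin 3 → k) :
    L v X * L w X =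
      symMap v w 0 * (X 0 * X 0) + symMap v w 1 * (X 1 * X 1) +
      symMap v w 2 * (X 2 * X 2) + symMap v w 3 * (X 0 * X 1) +
      symMap v w 4 * (X 0 * X 2) + symMap v w 5 * (X 1 * X 2) := by
  simp [L, symMap, Matrix.cons_val_succ, vec6_five]; ring

/-- A product of two linear forms vanishes identically only if one factor is zero. -/
lemma eq_zero_of_forall_mul (v u : Fin 3 → k) (hv : v ≠ 0)
    (h : ∀ X, L v X * L u X = 0) : u = 0 := by
  by_contra hu
  obtain ⟨i, hi⟩ := Function.ne_iff.mp hv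
  obtain ⟨j, hj⟩ := Function.ne_iff.mp hu
  simp only [Pi.zero_apply] at hi hj
  have hei := h (Pi.single i 1)
  have hej := h (Pi.single j 1)
  rw [L_single, L_single] at hei hej
  have hui : u i = 0 := by
    rcases mul_eq_zero.mp hei with h' | h'
    · exact absurd (by simpa using h') hi
    · simpa using h'
  have hvj : v j = 0 := by
    rcases mul_eq_zero.mp hej with h' | h'
    · simpa using h'
    · exact absurd (by simpa using h') hj
  have := h (Pi.single i 1 + Pi.single j 1)
  rw [L_add, L_add, L_single, L_single, L_single, L_single] at this
  rw [hui, hvj] at this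
  simp at this
  rcases this with h' | h'
  · exact hi h'
  · exact hj h'

/-- If the kernel of `L v` is contained in the kernel of `L v'` then `v'` is a
unit multiple of `v`. -/
lemma prop_of_ker_sub (v v' : Fin 3 → k) (hv : v ≠ 0) (hv' : v' ≠ 0)
    (h : ∀ X, L v X = 0 → L v' X = 0) : ∃ a : kˣ, v' = (a : k) • v := by
  obtain ⟨i, hi⟩ := Function.ne_iff.mp hv
  simp only [Pi.zero_apply] at hi
  have key : ∀ j, v' j = (v' i / v i) * v j := by
    intro j
    have hXv : L v (Pi.single j (v i) + Pi.single i (-(v j))) = 0 := by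
      rw [L_add, L_single, L_single]; ring
    have hXv' := h _ hXv
    rw [L_add, L_single, L_single] at hXv'
    field_simp
    linear_combination hXv'
  have ha : v' i / v i ≠ 0 := by
    intro h0
    apply hv'
    funext j
    rw [key j, h0, zero_mul, Pi.zero_apply]
  exact ⟨Units.mk0 _ ha, funext fun j => key j⟩

/-- Dichotomy: if `L p · L q` vanishes on the kernel of `L v`, then one of the
factors vanishes on all of the kernel. -/
lemma dichotomy (v p q : Fin 3 → k)
    (h : ∀ X, L v X = 0 → L p X * L q X = 0) :
    (∀ X, L v X = 0 → L p X = 0) ∨ (∀ X, L v X = 0 → L q X = 0) := by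
  by_contra hc
  push_neg at hc
  obtain ⟨⟨x, hx, hpx⟩, ⟨y, hy, hqy⟩⟩ := hc
  have hqx : L q x = 0 := by
    rcases mul_eq_zero.mp (h x hx) with h' | h'
    · exact absurd h' hpx
    · exact h'
  have hpy : L p y = 0 := by
    rcases mul_eq_zero.mp (h y hy) with h' | h'
    · exact h'
    · exact absurd h' hqy
  have hxy : L v (x + y) = 0 := by rw [L_add, hx, hy, add_zero]
  have := h (x + y) hxy
  rw [L_add, L_add, hqx, hpy] at this
  simp at this
  rcases this with h' | h'
  · exact hpx h'
  · exact hqy h'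

end Stmt15Aux

open Stmt15Aux in
/-- The map `ℙ² × ℙ² → ℙ⁵` above is a well-defined morphism (the six coordinates
have no common zero on `ℙ² × ℙ²`), and two points of `ℙ² × ℙ²` have the same
image if and only if they agree up to swapping the two factors.  Points of
`ℙ² × ℙ²` are represented by pairs of nonzero triples up to independent scaling. -/
theorem stmt15 (k : Type*) [Field k] [IsAlgClosed k] :
    (∀ v w : Fin 3 → k, v ≠ 0 → w ≠ 0 → symMap v w ≠ 0) ∧
    (∀ v w v' w' : Fin 3 → k, v ≠ 0 → w ≠ 0 → v' ≠ 0 → w' ≠ 0 →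
      ((∃ c : kˣ, symMap v' w' = (c : k) • symMap v w) ↔
        (((∃ a : kˣ, v' = (a : k) • v) ∧ (∃ b : kˣ, w' = (b : k) • w)) ∨
          ((∃ a : kˣ, v' = (a : k) • w) ∧ (∃ b : kˣ, w' = (b : k) • v))))) := by
  constructor
  · -- well-definedness: the six coordinates never all vanish
    intro v w hv hw hcontra
    apply hw
    apply eq_zero_of_forall_mul v w hv
    intro X
    rw [prod_expand]
    simp [hcontra]
  · intro v w v' w' hv hw hv' hw'
    constructor
    · -- forward: same image ⇒ equal up to swap
      rintro ⟨c, hc⟩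
      -- pointwise identity of quadratic forms
      have key : ∀ X, L v' X * L w' X = (c : k) * (L v X * L w X) := by
        intro X
        rw [prod_expand, prod_expand, hc]
        simp only [Pi.smul_apply, smul_eq_mul]
        ring
      have hker : ∀ X, L v X = 0 → L v' X * L w' X = 0 := by
        intro X hX
        rw [key X, hX]; ring
      rcases dichotomy v v' w' hker with hd | hd
      · -- v' proportional to v
        obtain ⟨a, ha⟩ := prop_of_ker_sub v v' hv hv' hd
        left
        refine ⟨⟨a, ha⟩, a⁻¹ * c, ?_⟩
        -- show (a:k) • w' - (c:k) • w = 0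
        have hzero : (a : k) • w' - (c : k) • w = 0 := by
          apply eq_zero_of_forall_mul v _ hv
          intro X
          rw [L_sub_left, L_smul_left, L_smul_left]
          have := key X
          rw [ha, L_smul_left] at this
          linear_combination this
        have : (a : k) • w' = (c : k) • w := by
          rwa [sub_eq_zero] at hzero
        funext j
        have hj := congrFun this j
        simp only [Pi.smul_apply, smul_eq_mul] at hj ⊢
        simp only [Units.val_mul, Units.val_inv_eq_inv_val]
        field_simp
        linear_combination hj
      · -- w' proportional to v : swap case
        obtain ⟨a, ha⟩ := prop_of_ker_sub v w' hv hw' hd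
        right
        refine ⟨⟨a⁻¹ * c, ?_⟩, a, ha⟩
        have hzero : (a : k) • v' - (c : k) • w = 0 := by
          apply eq_zero_of_forall_mul v _ hv
          intro X
          rw [L_sub_left, L_smul_left, L_smul_left]
          have := key X
          rw [ha, L_smul_left] at this
          linear_combination this
        have : (a : k) • v' = (c : k) • w := by
          rwa [sub_eq_zero] at hzero
        funext j
        have hj := congrFun this j
        simp only [Pi.smul_apply, smul_eq_mul] at hj ⊢
        simp only [Units.val_mul, Units.val_inv_eq_inv_val]
        field_simp
        linear_combination hj
    · -- reverse: equal up to swap ⇒ same image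
      rintro (⟨⟨a, ha⟩, ⟨b, hb⟩⟩ | ⟨⟨a, ha⟩, ⟨b, hb⟩⟩) <;>
        exact ⟨a * b, by
          subst ha hb
          funext i
          fin_cases i <;> simp [symMap, Units.val_mul, Matrix.cons_val_succ, Stmt15Aux.vec6_five] <;> ring⟩
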